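/- Fix an integer M ≥ 1 and r ∈ ℝ, and let f : ℝ³ → ℝ³ be the rescaled Lorenz vector field f(x₁,x₂,x₃) = (30x₂ − 30x₁, 3Mx₁r − 3Mx₁x₃ − 3x₂ + 3x₁, 3Mx₁x₂ − 8x₃), with global flow φ. If there exists a continuously differentiable function V : ℝ³ → ℝ such that f(x) · ∇V(x) ≥ (x₂ − x₁)² for all x ∈ ℝ³, then the system is globally stable: for every x ∈ ℝ³, dist(φ(x,t), E) → 0 as t → ∞, where E = {y ∈ ℝ³ : f(y) = 0} is the set of stationary points. -/

import Mathlib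

/-!
The function `V` increases along trajectories, and forward trajectories are bounded because
`‖x - (0, 0, r + 11 / M)‖²` decays outside a ball. By LaSalle's invariance principle every
ω-limit point `p` has a whole orbit, bounded in both time directions, along which `V` is constant.
There `f · ∇V = 0`, so `x₁ = x₀`; then `x₀` is constant, and either `x₀ ≠ 0` and `x₂ ≡ r`, or
`x₀ = 0` and `x₂` is a solution of `x₂' = -8 x₂` that stays bounded as `t → -∞`, so `x₂ ≡ 0`.
Either way `p` is stationary.
-/

open Filter Topology Metric Set

theorem le_max_of_hasDerivAt_le_sub_mul {u u' : ℝ → ℝ} {a C : ℝ} (ha : 0 < a)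
    (hu : ∀ t, HasDerivAt u (u' t) t) (hle : ∀ t, u' t ≤ C - a * u t) {t : ℝ}
    (ht : 0 ≤ t) : u t ≤ max (u 0) (C / a) := by
  have hg : ∀ s, HasDerivAt (fun s => (u s - C / a) * Real.exp (a * s))
      ((u' s + a * u s - C) * Real.exp (a * s)) s := fun s => by
    have he : HasDerivAt (fun s => Real.exp (a * s)) (Real.exp (a * s) * a) s := by
      simpa using ((hasDerivAt_id s).const_mul a).exp
    refine (((hu s).sub_const (C / a)).mul he).congr_deriv ?_
    field_simp
    ring
  have hanti : Antitone fun s => (u s - C / a) * Real.exp (a * s) :=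
    antitone_of_hasDerivAt_nonpos hg fun s =>
      mul_nonpos_of_nonpos_of_nonneg (by linarith [hle s]) (Real.exp_pos _).le
  have hdecay : (u t - C / a) * Real.exp (a * t) ≤ u 0 - C / a := by
    simpa using hanti ht
  have hexp : 1 ≤ Real.exp (a * t) := Real.one_le_exp (by positivity)
  rcases le_or_gt (u t) (C / a) with h | h
  · exact h.trans (le_max_right _ _)
  · exact le_max_of_le_left (by nlinarith)

theorem eq_zero_of_hasDerivAt_neg_mul {u : ℝ → ℝ} {c : ℝ} (hc : 0 < c)
    (hu : ∀ s, HasDerivAt u (-c * u s) s) {B : ℝ} (hB : ∀ s, |u s| ≤ B) : u = 0 := by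
  have hconst : ∀ s t, u s * Real.exp (c * s) = u t * Real.exp (c * t) := by
    have hd : ∀ s, HasDerivAt (fun s => u s * Real.exp (c * s)) 0 s := fun s => by
      have he : HasDerivAt (fun s => Real.exp (c * s)) (Real.exp (c * s) * c) s := by
        simpa using ((hasDerivAt_id s).const_mul c).exp
      exact ((hu s).mul he).congr_deriv (by ring)
    exact is_const_of_deriv_eq_zero (fun s => (hd s).differentiableAt) fun s => (hd s).deriv
  funext s
  have hle : ∀ t, |u s| * Real.exp (c * s) ≤ B * Real.exp (c * t) := fun t => by
    rw [← abs_of_pos (Real.exp_pos (c * s)), ← abs_mul, hconst s t, abs_mul,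
      abs_of_pos (Real.exp_pos _)]
    exact mul_le_mul_of_nonneg_right (hB t) (Real.exp_pos _).le
  have hlim : Tendsto (fun t => B * Real.exp (c * t)) atBot (𝓝 0) := by
    simpa using (Real.tendsto_exp_atBot.comp (tendsto_id.const_mul_atBot hc)).const_mul B
  have h0 : |u s| * Real.exp (c * s) ≤ 0 := ge_of_tendsto hlim (Eventually.of_forall hle)
  simpa using abs_nonpos_iff.1 (nonpos_of_mul_nonpos_left h0 (Real.exp_pos _))

section ODE

variable {E : Type*} [NormedAddCommGroup E] [NormedSpace ℝ E]

theorem ODE_solution_unique_of_locallyLipschitz {v : E → E} (hv : LocallyLipschitz v)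
    {γ₁ γ₂ : ℝ → E} (hγ₁ : ∀ t, HasDerivAt γ₁ (v (γ₁ t)) t)
    (hγ₂ : ∀ t, HasDerivAt γ₂ (v (γ₂ t)) t) {t₀ : ℝ} (h : γ₁ t₀ = γ₂ t₀) : γ₁ = γ₂ := by
  have hc₁ : Continuous γ₁ := continuous_iff_continuousAt.2 fun t => (hγ₁ t).continuousAt
  have hc₂ : Continuous γ₂ := continuous_iff_continuousAt.2 fun t => (hγ₂ t).continuousAt
  suffices {t | γ₁ t = γ₂ t} = univ from funext (eq_univ_iff_forall.1 this)
  refine IsClopen.eq_univ ⟨isClosed_eq hc₁ hc₂, ?_⟩ ⟨t₀, h⟩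
  refine isOpen_iff_mem_nhds.2 fun t (ht : γ₁ t = γ₂ t) => ?_
  obtain ⟨K, U, hU, hK⟩ := hv (γ₁ t)
  have hU₁ : ∀ᶠ s in 𝓝 t, γ₁ s ∈ U := hc₁.continuousAt hU
  have hU₂ : ∀ᶠ s in 𝓝 t, γ₂ s ∈ U := hc₂.continuousAt (ht ▸ hU)
  exact ODE_solution_unique_of_eventually (v := fun _ => v) (s := fun _ => U)
    (Eventually.of_forall fun _ => hK) (hU₁.mono fun s hs => ⟨hγ₁ s, hs⟩)
    (hU₂.mono fun s hs => ⟨hγ₂ s, hs⟩) ht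

theorem flow_add {v : E → E} (hv : LocallyLipschitz v) {φ : E → ℝ → E}
    (hφ0 : ∀ x, φ x 0 = x) (hφ : ∀ x t, HasDerivAt (φ x) (v (φ x t)) t) (x : E) (t s : ℝ) :
    φ (φ x t) s = φ x (t + s) := by
  have hshift : ∀ u, HasDerivAt (fun u => φ x (t + u)) (v (φ x (t + u))) u := fun u =>
    (hφ x (t + u)).comp_const_add t u
  exact congrFun (ODE_solution_unique_of_locallyLipschitz hv (hφ _) hshift
    (t₀ := 0) (by simp [hφ0])) s

variable {v : E → E} {V : E → ℝ} {γ : ℝ → E}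

theorem monotone_comp_of_fderiv_nonneg (hV : Differentiable ℝ V)
    (hγ : ∀ t, HasDerivAt γ (v (γ t)) t) (hVv : ∀ y, 0 ≤ fderiv ℝ V y (v y)) :
    Monotone fun t => V (γ t) :=
  monotone_of_hasDerivAt_nonneg (fun t => (hV (γ t)).hasFDerivAt.comp_hasDerivAt t (hγ t))
    fun t => hVv (γ t)

theorem fderiv_eq_zero_of_comp_eq (hV : Differentiable ℝ V)
    (hγ : ∀ t, HasDerivAt γ (v (γ t)) t) {c : ℝ} (hc : ∀ t, V (γ t) = c) (t : ℝ) :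
    fderiv ℝ V (γ t) (v (γ t)) = 0 := by
  have h := (hV (γ t)).hasFDerivAt.comp_hasDerivAt t (hγ t)
  rw [show V ∘ γ = fun _ => c from funext hc] at h
  exact h.unique (hasDerivAt_const t c)

theorem norm_sub_sq_le_max_of_inner_le {F : Type*} [NormedAddCommGroup F]
    [InnerProductSpace ℝ F] {v : F → F} {γ : ℝ → F} (hγ : ∀ t, HasDerivAt γ (v (γ t)) t) {c : F}
    {a C : ℝ} (ha : 0 < a) (hv : ∀ y, 2 * inner ℝ (y - c) (v y) ≤ C - a * ‖y - c‖ ^ 2) {t : ℝ}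
    (ht : 0 ≤ t) : ‖γ t - c‖ ^ 2 ≤ max (‖γ 0 - c‖ ^ 2) (C / a) :=
  le_max_of_hasDerivAt_le_sub_mul ha (fun t => ((hγ t).sub_const c).norm_sq)
    (fun t => hv (γ t)) ht

end ODE

section LaSalle

variable {X : Type*} [MetricSpace X] {φ : X → ℝ → X}

theorem tendsto_flow_add_of_tendsto (hφc : ∀ s, Continuous fun y => φ y s)
    (hφadd : ∀ y t s, φ (φ y t) s = φ y (t + s)) {x p : X} {w : ℕ → ℝ}
    (hw : Tendsto (fun n => φ x (w n)) atTop (𝓝 p)) (s : ℝ) :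
    Tendsto (fun n => φ x (w n + s)) atTop (𝓝 (φ p s)) := by
  simpa only [Function.comp_def, hφadd] using ((hφc s).tendsto p).comp hw

theorem lasalle_tendsto_infDist (hφc : ∀ s, Continuous fun y => φ y s)
    (hφ0 : ∀ y, φ y 0 = y) (hφadd : ∀ y t s, φ (φ y t) s = φ y (t + s)) {V : X → ℝ}
    (hV : Continuous V) {x : X} (hmono : Monotone fun t => V (φ x t)) {K : Set X} (hK : IsCompact K)
    (hxK : ∀ t, 0 ≤ t → φ x t ∈ K) {S : Set X}
    (hS : ∀ p, (∀ s, φ p s ∈ K) → (∀ s, V (φ p s) = V p) → p ∈ S) :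
    Tendsto (fun t => infDist (φ x t) S) atTop (𝓝 0) := by
  obtain ⟨L, hL⟩ : ∃ L, Tendsto (fun t => V (φ x t)) atTop (𝓝 L) := by
    obtain ⟨B, hB⟩ := hK.exists_bound_of_continuousOn hV.continuousOn
    refine ⟨_, tendsto_atTop_ciSup hmono ⟨B, ?_⟩⟩
    rintro _ ⟨t, rfl⟩
    calc V (φ x t) ≤ V (φ x (max t 0)) := hmono (le_max_left t 0)
      _ ≤ B := (le_abs_self _).trans (hB _ (hxK _ (le_max_right t 0)))
  by_contra hne
  obtain ⟨ε, hε, hfar⟩ : ∃ ε > 0, ∀ T : ℝ, ∃ t ≥ T, ε ≤ infDist (φ x t) S := by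
    simpa [Metric.tendsto_atTop, abs_of_nonneg infDist_nonneg] using hne
  choose u hu huε using fun n : ℕ => hfar n
  have hu0 : ∀ n, 0 ≤ u n := fun n => (Nat.cast_nonneg n).trans (hu n)
  obtain ⟨p, -, σ, hσ, hp⟩ := hK.tendsto_subseq fun n => hxK _ (hu0 n)
  have hw : Tendsto (u ∘ σ) atTop atTop :=
    (tendsto_atTop_mono hu tendsto_natCast_atTop_atTop).comp hσ.tendsto_atTop
  have horbit := tendsto_flow_add_of_tendsto hφc hφadd hp
  have hVorbit : ∀ s, V (φ p s) = L := fun s =>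
    tendsto_nhds_unique ((hV.tendsto _).comp (horbit s))
      (hL.comp (tendsto_atTop_add_const_right _ s hw))
  have hpS : p ∈ S := by
    refine hS p (fun s => hK.isClosed.mem_of_tendsto (horbit s) ?_) fun s => ?_
    · filter_upwards [hw.eventually_ge_atTop (-s)] with n hn
      exact hxK _ (neg_le_iff_add_nonneg.1 hn)
    · rw [hVorbit, ← hVorbit 0, hφ0]
  have hlim : Tendsto (fun n => infDist (φ x (u (σ n))) S) atTop (𝓝 (infDist p S)) :=
    ((continuous_infDist_pt S).tendsto p).comp hp
  have := ge_of_tendsto hlim (Eventually.of_forall fun n => huε (σ n))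
  rw [infDist_zero_of_mem hpS] at this
  linarith

end LaSalle

local notation "ℝ³" => EuclideanSpace ℝ (Fin 3)

def lorenzField (M r : ℝ) (x : ℝ³) : ℝ³ :=
  WithLp.toLp 2 ![30 * x 1 - 30 * x 0, 3 * M * x 0 * r - 3 * M * x 0 * x 2 - 3 * x 1 + 3 * x 0,
    3 * M * x 0 * x 1 - 8 * x 2]

section Lorenz

variable {M r : ℝ}

@[simp] lemma lorenzField_apply_zero (x : ℝ³) :
    lorenzField M r x 0 = 30 * x 1 - 30 * x 0 := rfl

@[simp] lemma lorenzField_apply_one (x : ℝ³) :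
    lorenzField M r x 1 = 3 * M * x 0 * r - 3 * M * x 0 * x 2 - 3 * x 1 + 3 * x 0 := rfl

@[simp] lemma lorenzField_apply_two (x : ℝ³) :
    lorenzField M r x 2 = 3 * M * x 0 * x 1 - 8 * x 2 := rfl

theorem contDiff_lorenzField {n : WithTop ℕ∞} : ContDiff ℝ n (lorenzField M r) := by
  rw [contDiff_euclidean]
  intro i
  fin_cases i <;> dsimp [lorenzField] <;> fun_prop

/-- The shift `11 / M` of the centre cancels the cross terms `x₀ x₁` in the inner product. -/
theorem lorenzField_dissipative (hM : M ≠ 0) (y : ℝ³) :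
    2 * inner ℝ (y - EuclideanSpace.single 2 (r + 11 / M)) (lorenzField M r y) ≤
      7 * (r + 11 / M) ^ 2 - 6 * ‖y - EuclideanSpace.single 2 (r + 11 / M)‖ ^ 2 := by
  set k := r + 11 / M
  have hk : M * k = M * r + 11 := by rw [mul_add, mul_div_cancel₀ _ hM]
  clear_value k
  rw [EuclideanSpace.norm_sq_eq, PiLp.inner_apply, Fin.sum_univ_three, Fin.sum_univ_three]
  simp only [PiLp.sub_apply, ne_eq, Fin.reduceEq, not_false_eq_true, PiLp.single_eq_of_ne,
    sub_zero, PiLp.single_eq_same, RCLike.inner_apply, Real.ringHom_apply, Real.norm_eq_abs,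
    sq_abs, lorenzField_apply_zero, lorenzField_apply_one, lorenzField_apply_two]
  linear_combination (-6 * y 0 * y 1) * hk + 54 * sq_nonneg (y 0) + sq_nonneg (k - 2 * y 2) +
    6 * sq_nonneg (y 2)

theorem lorenz_exists_forall_mem_closedBall (hM : M ≠ 0) {γ : ℝ → ℝ³}
    (hγ : ∀ t, HasDerivAt γ (lorenzField M r (γ t)) t) :
    ∃ c R, ∀ t, 0 ≤ t → γ t ∈ closedBall c R :=
  ⟨_, _, fun t ht => mem_closedBall_iff_norm.2 <| (le_abs_self _).trans <| Real.abs_le_sqrt <|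
    norm_sub_sq_le_max_of_inner_le hγ (by norm_num : (0 : ℝ) < 6) (lorenzField_dissipative hM) ht⟩

theorem lorenzField_eq_zero_of_forall_eq (hM : M ≠ 0) {γ : ℝ → ℝ³}
    (hγ : ∀ s, HasDerivAt γ (lorenzField M r (γ s)) s) (hbdd : Bornology.IsBounded (range γ))
    (hplane : ∀ s, γ s 1 = γ s 0) : lorenzField M r (γ 0) = 0 := by
  have hcoord : ∀ i s, HasDerivAt (fun s => γ s i) (lorenzField M r (γ s) i) s := fun i s =>
    (EuclideanSpace.proj (𝕜 := ℝ) i).hasFDerivAt.comp_hasDerivAt s (hγ s)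
  have hconst : ∀ i c, (∀ s, γ s i = c) → ∀ s, lorenzField M r (γ s) i = 0 := fun i c hc s => by
    have h := hcoord i s
    rw [show (fun s => γ s i) = fun _ => c from funext hc] at h
    exact h.unique (hasDerivAt_const s c)
  obtain ⟨B, hB⟩ := hbdd.exists_norm_le
  have h0 : ∀ s, γ s 0 = γ 0 0 := fun s =>
    is_const_of_deriv_eq_zero (fun s => (hcoord 0 s).differentiableAt)
      (fun s => by simp [(hcoord 0 s).deriv, hplane s]) s 0
  have hf1 : ∀ s, lorenzField M r (γ s) 1 = 0 :=
    hconst 1 (γ 0 0) fun s => (hplane s).trans (h0 s)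
  ext i
  fin_cases i
  · simp [hplane 0]
  · exact hf1 0
  · show lorenzField M r (γ 0) 2 = 0
    rcases eq_or_ne (γ 0 0) 0 with ha | ha
    · have h2 : (fun s => γ s 2) = 0 := by
        refine eq_zero_of_hasDerivAt_neg_mul (by norm_num : (0:ℝ) < 8) (fun s => ?_)
          (fun s => (PiLp.norm_apply_le (γ s) 2).trans (hB _ (mem_range_self s)))
        simpa [h0 s, ha] using hcoord 2 s
      simp [ha, congrFun h2 0]
    · refine hconst 2 r (fun s => ?_) 0
      have h1 := hf1 s
      rw [lorenzField_apply_one, hplane s, h0 s] at h1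
      have hprod : 3 * M * γ 0 0 * (r - γ s 2) = 0 := by linear_combination h1
      exact (sub_eq_zero.1 ((mul_eq_zero.1 hprod).resolve_left (by simp [hM, ha]))).symm

end Lorenz

/-- For the rescaled Lorenz vector field (integer `M ≥ 1`, parameter `r`),
if a C¹ function `V` satisfies `f(x) · ∇V(x) ≥ (x₂ - x₁)²` everywhere, then the system is
globally stable: every trajectory of the global flow converges to the set of stationary
points. -/
theorem rescaled_lorenz_globally_stable
    (M : ℤ) (hM : 1 ≤ M) (r : ℝ)
    (f : EuclideanSpace ℝ (Fin 3) → EuclideanSpace ℝ (Fin 3))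
    (hfdef : ∀ x : EuclideanSpace ℝ (Fin 3),
      f x = ![30 * x 1 - 30 * x 0,
              3 * (M : ℝ) * x 0 * r - 3 * (M : ℝ) * x 0 * x 2 - 3 * x 1 + 3 * x 0,
              3 * (M : ℝ) * x 0 * x 1 - 8 * x 2])
    (φ : EuclideanSpace ℝ (Fin 3) → ℝ → EuclideanSpace ℝ (Fin 3))
    (hφ : ContDiff ℝ 1 (fun p : EuclideanSpace ℝ (Fin 3) × ℝ => φ p.1 p.2))
    (hφ0 : ∀ x, φ x 0 = x)
    (hφ' : ∀ x t, HasDerivAt (φ x) (f (φ x t)) t)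
    (V : EuclideanSpace ℝ (Fin 3) → ℝ)
    (hV : ContDiff ℝ 1 V)
    (hVf : ∀ x : EuclideanSpace ℝ (Fin 3), (x 1 - x 0) ^ 2 ≤ fderiv ℝ V x (f x)) :
    ∀ x : EuclideanSpace ℝ (Fin 3),
      Tendsto (fun t => Metric.infDist (φ x t) {y : EuclideanSpace ℝ (Fin 3) | f y = 0})
        atTop (𝓝 0) := by
  intro x
  have hf : f = lorenzField M r := funext fun y => WithLp.ofLp_injective 2 (hfdef y)
  subst hf
  have hM0 : (M : ℝ) ≠ 0 := by exact_mod_cast (by omega : M ≠ 0)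
  have hVd : Differentiable ℝ V := hV.differentiable one_ne_zero
  have hφc : ∀ s, Continuous fun y => φ y s := fun s =>
    hφ.continuous.comp (continuous_id.prodMk continuous_const)
  obtain ⟨c, R, hR⟩ := lorenz_exists_forall_mem_closedBall hM0 (hφ' x)
  refine lasalle_tendsto_infDist hφc hφ0 (flow_add contDiff_lorenzField.locallyLipschitz hφ0 hφ')
    hV.continuous (monotone_comp_of_fderiv_nonneg hVd (hφ' x) fun y => (sq_nonneg _).trans (hVf y))
    (isCompact_closedBall c R) hR fun p hpK hpV => ?_
  have hplane : ∀ s, φ p s 1 = φ p s 0 := fun s => by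
    have h := hVf (φ p s)
    rw [fderiv_eq_zero_of_comp_eq hVd (hφ' p) hpV s] at h
    exact sub_eq_zero.1 (pow_eq_zero_iff two_ne_zero |>.1 (le_antisymm h (sq_nonneg _)))
  simpa only [mem_ofPred_eq, hφ0] using lorenzField_eq_zero_of_forall_eq hM0 (hφ' p)
    (isBounded_closedBall.subset (range_subset_iff.2 hpK)) hplane
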